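/- Let β, λ > 0, x > 0 and 0 ≤ e ≤ x. Let p : (0,x] × [0,2π] → [0,∞) be measurable, integrable against t dt dθ on (e,x]×[0,2π], and satisfy e^{−βx} e^{−βt} ≤ p(t,θ) ≤ exp(−βx − βt + (t/2)β(1 + cos θ)) for all t ∈ (0,x] and θ ∈ [0,2π]. Define G[p] = exp(−βx − λπe² − λ e^{βx} ∫₀^{2π} ∫ₑ^x p(t,θ) · t dt dθ). Then exp(−βx − λπe² − (2πλ/(3β))(F(x) − F(e))) ≤ G[p] ≤ exp(−βx − λπe² − (2πλ/β²)(F₁(e) − F₁(x))), where F₁(z) = (1 + βz)e^{−βz} and F(r) = r e^{−βr/2}( βr·I₀(βr/2) + (βr+2)·I₁(βr/2) ), with I₀(a) = (1/π)∫₀^π e^{a cos u} du and I₁(a) = (1/π)∫₀^π e^{a cos u} cos u du. -/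

import Mathlib

open MeasureTheory Real

/-- Modified Bessel function of the first kind of order 0 (integral form). -/
noncomputable def besselI0 (a : ℝ) : ℝ :=
  (1 / π) * ∫ u in (0:ℝ)..π, Real.exp (a * Real.cos u)

/-- Modified Bessel function of the first kind of order 1 (integral form). -/
noncomputable def besselI1 (a : ℝ) : ℝ :=
  (1 / π) * ∫ u in (0:ℝ)..π, Real.exp (a * Real.cos u) * Real.cos u

/-- `F₁(z) = (1 + βz)e^{−βz}`. -/
noncomputable def funF1 (β z : ℝ) : ℝ := (1 + β * z) * Real.exp (-β * z)

/-- `F(r) = r e^{−βr/2}(βr·I₀(βr/2) + (βr+2)·I₁(βr/2))`. -/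
noncomputable def funF (β r : ℝ) : ℝ :=
  r * Real.exp (-β * r / 2) *
    (β * r * besselI0 (β * r / 2) + (β * r + 2) * besselI1 (β * r / 2))

/-!
Both bounds follow by integrating the pointwise bounds on `p` against `t dt dθ` over
`(e, x] × (0, 2π]` and using that `exp` is monotone. The independent-blocking integral is
elementary. For the correlated one, with `K(r, u) = exp (βr/2 (cos u - 1))`, the function
`G(r, u) = r (βr + (βr + 2) cos u) K(r, u)` satisfies `∂ᵣ G = 3βr K + ∂ᵤ Ψ` with
`Ψ(r, u) = (2 + βr) sin u K(r, u)`. Integrating over the rectangle, the `Ψ` term vanishes since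
`sin 0 = sin 2π = 0`, while `∫₀^{2π} G(r, u) du = 2π F(r)` by the integral representations of
`I₀, I₁`; so no derivative of a Bessel function is ever needed.
-/

open Set Function

theorem integral_comp_cos_zero_two_pi {E : Type*} [NormedAddCommGroup E] [NormedSpace ℝ E]
    {f : ℝ → E} (hf : Continuous f) :
    ∫ u in (0:ℝ)..2 * π, f (cos u) = (2:ℝ) • ∫ u in (0:ℝ)..π, f (cos u) := by
  have hint : ∀ a b : ℝ, IntervalIntegrable (fun u => f (cos u)) volume a b := fun a b =>
    (hf.comp continuous_cos).intervalIntegrable a b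
  have hreflect : ∫ u in π..2 * π, f (cos u) = ∫ u in (0:ℝ)..π, f (cos u) := by
    have := intervalIntegral.integral_comp_sub_left (fun u => f (cos u)) (2 * π)
      (a := 0) (b := π)
    simp only [cos_two_pi_sub, sub_zero, show 2 * π - π = π by ring] at this
    exact this.symm
  rw [← intervalIntegral.integral_add_adjacent_intervals (hint 0 π) (hint π (2 * π)),
    hreflect, two_smul]

theorem intervalIntegral_intervalIntegral_eq_setIntegral_prod {f : ℝ → ℝ → ℝ}
    {a b c d : ℝ} (hab : a ≤ b) (hcd : c ≤ d)
    (hf : IntegrableOn (fun q : ℝ × ℝ => f q.1 q.2) (Ioc a b ×ˢ Ioc c d)) :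
    ∫ θ in c..d, ∫ t in a..b, f t θ = ∫ q in Ioc a b ×ˢ Ioc c d, f q.1 q.2 := by
  rw [← intervalIntegral_intervalIntegral_swap (by simpa [uIoc_of_le hab, uIoc_of_le hcd]),
    intervalIntegral.integral_of_le hab, Measure.volume_eq_prod,
    setIntegral_prod _ (by rwa [← Measure.volume_eq_prod])]
  simp only [intervalIntegral.integral_of_le hcd]

theorem intervalIntegral_intervalIntegral_mono {f g : ℝ → ℝ → ℝ} {a b c d : ℝ}
    (hab : a ≤ b) (hcd : c ≤ d)
    (hf : IntegrableOn (fun q : ℝ × ℝ => f q.1 q.2) (Ioc a b ×ˢ Ioc c d))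
    (hg : IntegrableOn (fun q : ℝ × ℝ => g q.1 q.2) (Ioc a b ×ˢ Ioc c d))
    (hfg : ∀ t ∈ Ioc a b, ∀ θ ∈ Ioc c d, f t θ ≤ g t θ) :
    ∫ θ in c..d, ∫ t in a..b, f t θ ≤ ∫ θ in c..d, ∫ t in a..b, g t θ := by
  rw [intervalIntegral_intervalIntegral_eq_setIntegral_prod hab hcd hf,
    intervalIntegral_intervalIntegral_eq_setIntegral_prod hab hcd hg]
  exact setIntegral_mono_on hf hg (measurableSet_Ioc.prod measurableSet_Ioc)
    fun q hq => hfg q.1 hq.1 q.2 hq.2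

theorem Continuous.integrableOn_of_isBounded {X E : Type*} [MetricSpace X] [ProperSpace X]
    [MeasurableSpace X] [OpensMeasurableSpace X] {μ : Measure X} [IsFiniteMeasureOnCompacts μ]
    [NormedAddCommGroup E] {f : X → E} (hf : Continuous f) {s : Set X}
    (hs : Bornology.IsBounded s) : IntegrableOn f s μ :=
  (hf.continuousOn.integrableOn_compact hs.isCompact_closure).mono_set subset_closure

theorem integral_exp_neg_mul_mul {β : ℝ} (hβ : β ≠ 0) (a b : ℝ) :
    ∫ t in a..b, exp (-β * t) * t = (funF1 β a - funF1 β b) / β ^ 2 := by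
  have hderiv : ∀ t ∈ uIcc a b,
      HasDerivAt (fun z => -funF1 β z / β ^ 2) (exp (-β * t) * t) t := by
    intro t _
    have := (((hasDerivAt_id t).const_mul β).const_add 1).mul
      ((hasDerivAt_id t).const_mul (-β)).exp
    refine (this.neg.div_const (β ^ 2)).congr_deriv ?_
    simp only [id]
    field_simp
    ring
  rw [intervalIntegral.integral_eq_sub_of_hasDerivAt hderiv
    ((by fun_prop : Continuous fun t => exp (-β * t) * t).intervalIntegrable a b)]
  ring

theorem two_pi_mul_besselI0 (a : ℝ) :
    2 * π * besselI0 a = ∫ u in (0:ℝ)..2 * π, exp (a * cos u) := by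
  rw [integral_comp_cos_zero_two_pi (f := fun c => exp (a * c)) (by fun_prop), besselI0,
    smul_eq_mul]
  field_simp

theorem two_pi_mul_besselI1 (a : ℝ) :
    2 * π * besselI1 a = ∫ u in (0:ℝ)..2 * π, exp (a * cos u) * cos u := by
  rw [integral_comp_cos_zero_two_pi (f := fun c => exp (a * c) * c) (by fun_prop), besselI1,
    smul_eq_mul]
  field_simp

noncomputable def corrKernel (β t θ : ℝ) : ℝ := exp (β * t / 2 * (cos θ - 1))

noncomputable def kernelPrimitive (β r u : ℝ) : ℝ :=
  r * (β * r + (β * r + 2) * cos u) * corrKernel β r u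

noncomputable def kernelDefect (β r u : ℝ) : ℝ := (2 + β * r) * sin u * corrKernel β r u

noncomputable def kernelDefectDeriv (β r u : ℝ) : ℝ :=
  (2 + β * r) * (cos u - β * r / 2 * sin u ^ 2) * corrKernel β r u

theorem continuous_corrKernel (β : ℝ) : Continuous (uncurry (corrKernel β)) := by
  unfold corrKernel; fun_prop

theorem continuous_kernelDefectDeriv (β : ℝ) : Continuous (uncurry (kernelDefectDeriv β)) := by
  unfold kernelDefectDeriv corrKernel; fun_prop

theorem hasDerivAt_kernelDefect (β r u : ℝ) :
    HasDerivAt (kernelDefect β r) (kernelDefectDeriv β r u) u := by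
  have hK : HasDerivAt (corrKernel β r) (corrKernel β r u * (β * r / 2 * -sin u)) u :=
    (((hasDerivAt_cos u).sub_const 1).const_mul (β * r / 2)).exp
  refine (((hasDerivAt_sin u).const_mul (2 + β * r)).mul hK).congr_deriv ?_
  simp only [kernelDefectDeriv]
  ring

theorem hasDerivAt_kernelPrimitive (β r u : ℝ) :
    HasDerivAt (kernelPrimitive β · u)
      (3 * β * r * corrKernel β r u + kernelDefectDeriv β r u) r := by
  have hK : HasDerivAt (corrKernel β · u) (corrKernel β r u * (β / 2 * (cos u - 1))) r := by
    have := (((hasDerivAt_id r).const_mul β).div_const 2).mul_const (cos u - 1)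
    exact this.exp.congr_deriv (by simp only [id, corrKernel]; ring)
  have hpoly : HasDerivAt (fun r => r * (β * r + (β * r + 2) * cos u))
      (β * r + (β * r + 2) * cos u + r * (β + β * cos u)) r := by
    have := (hasDerivAt_id r).mul ((((hasDerivAt_id r).const_mul β)).add
      ((((hasDerivAt_id r).const_mul β).add_const 2).mul_const (cos u)))
    exact this.congr_deriv (by simp only [id, Pi.add_apply]; ring)
  refine (hpoly.mul hK).congr_deriv ?_
  simp only [kernelDefectDeriv]
  rw [sin_sq]
  ring

theorem integral_kernelPrimitive (β r : ℝ) :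
    ∫ u in (0:ℝ)..2 * π, kernelPrimitive β r u = 2 * π * funF β r := by
  have hsplit : ∀ u, kernelPrimitive β r u = r * exp (-β * r / 2) *
      (β * r * exp (β * r / 2 * cos u) + (β * r + 2) * (exp (β * r / 2 * cos u) * cos u)) := by
    intro u
    rw [kernelPrimitive, corrKernel,
      show β * r / 2 * (cos u - 1) = -β * r / 2 + β * r / 2 * cos u by ring, exp_add]
    ring
  simp only [hsplit]
  rw [intervalIntegral.integral_const_mul, intervalIntegral.integral_add
      ((by fun_prop : Continuous _).intervalIntegrable _ _)
      ((by fun_prop : Continuous _).intervalIntegrable _ _), intervalIntegral.integral_const_mul,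
    intervalIntegral.integral_const_mul, ← two_pi_mul_besselI0, ← two_pi_mul_besselI1, funF]
  ring

theorem integral_integral_kernelDefectDeriv (β e x : ℝ) :
    ∫ u in (0:ℝ)..2 * π, ∫ r in e..x, kernelDefectDeriv β r u = 0 := by
  rw [intervalIntegral_intervalIntegral_swap (F := fun u r => kernelDefectDeriv β r u)
    (((continuous_kernelDefectDeriv β).comp continuous_swap).integrableOn_of_isBounded
      (Metric.isBounded_Ioc _ _ |>.prod (Metric.isBounded_Ioc _ _)))]
  have hcont : ∀ r, Continuous (kernelDefectDeriv β r) := fun r =>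
    (continuous_kernelDefectDeriv β).comp₂ continuous_const continuous_id
  simp [intervalIntegral.integral_eq_sub_of_hasDerivAt (fun u _ => hasDerivAt_kernelDefect β _ u)
    ((hcont _).intervalIntegrable _ _), kernelDefect]

theorem kernelPrimitive_sub_kernelPrimitive (β e x u : ℝ) :
    kernelPrimitive β x u - kernelPrimitive β e u
      = 3 * β * (∫ r in e..x, corrKernel β r u * r)
        + ∫ r in e..x, kernelDefectDeriv β r u := by
  have hcont : Continuous (corrKernel β · u) :=
    (continuous_corrKernel β).comp₂ continuous_id continuous_const
  have hcontD : Continuous (kernelDefectDeriv β · u) :=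
    (continuous_kernelDefectDeriv β).comp₂ continuous_id continuous_const
  rw [← intervalIntegral.integral_eq_sub_of_hasDerivAt
    (fun r _ => hasDerivAt_kernelPrimitive β r u)
    (((continuous_const.mul continuous_id).mul hcont).add hcontD |>.intervalIntegrable _ _),
    ← intervalIntegral.integral_const_mul, ← intervalIntegral.integral_add
    ((by fun_prop : Continuous fun r => 3 * β * (corrKernel β r u * r)).intervalIntegrable _ _)
    (hcontD.intervalIntegrable _ _)]
  congr 1 with r
  ring

theorem integral_integral_corrKernel_mul {β : ℝ} (hβ : β ≠ 0) (e x : ℝ) :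
    ∫ θ in (0:ℝ)..2 * π, ∫ t in e..x, corrKernel β t θ * t
      = 2 * π / (3 * β) * (funF β x - funF β e) := by
  have hcontK : Continuous fun u => ∫ r in e..x, corrKernel β r u * r :=
    intervalIntegral.continuous_parametric_intervalIntegral_of_continuous'
      (((continuous_corrKernel β).comp₂ continuous_snd continuous_fst).mul continuous_snd) _ _
  have hcontD' : Continuous fun u => ∫ r in e..x, kernelDefectDeriv β r u :=
    intervalIntegral.continuous_parametric_intervalIntegral_of_continuous'
      ((continuous_kernelDefectDeriv β).comp₂ continuous_snd continuous_fst) _ _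
  have hcontP : ∀ r, Continuous (kernelPrimitive β r) := fun r => by
    unfold kernelPrimitive corrKernel; fun_prop
  have hmain : 2 * π * (funF β x - funF β e)
      = 3 * β * ∫ θ in (0:ℝ)..2 * π, ∫ t in e..x, corrKernel β t θ * t := by
    rw [mul_sub, ← integral_kernelPrimitive, ← integral_kernelPrimitive,
      ← intervalIntegral.integral_sub
      ((hcontP x).intervalIntegrable _ _) ((hcontP e).intervalIntegrable _ _)]
    simp only [kernelPrimitive_sub_kernelPrimitive]
    rw [intervalIntegral.integral_add ((hcontK.const_mul _).intervalIntegrable _ _)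
      (hcontD'.intervalIntegrable _ _), intervalIntegral.integral_const_mul,
      integral_integral_kernelDefectDeriv, add_zero]
  field_simp
  linarith

section BlockingBounds

variable {β x e : ℝ} {p : ℝ → ℝ → ℝ}

theorem exp_mul_funF1_le_integral_integral (hβ : 0 < β) (he : 0 ≤ e) (hex : e ≤ x)
    (hi : IntegrableOn (fun q : ℝ × ℝ => p q.1 q.2 * q.1) (Ioc e x ×ˢ Icc 0 (2 * π)))
    (hlb : ∀ t ∈ Ioc (0:ℝ) x, ∀ θ ∈ Icc (0:ℝ) (2 * π),
      exp (-β * x) * exp (-β * t) ≤ p t θ) :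
    exp (-β * x) * (2 * π / β ^ 2 * (funF1 β e - funF1 β x))
      ≤ ∫ θ in (0:ℝ)..(2 * π), ∫ t in e..x, p t θ * t := calc
  _ = ∫ θ in (0:ℝ)..(2 * π), ∫ t in e..x, exp (-β * x) * exp (-β * t) * t := by
    simp only [mul_assoc, intervalIntegral.integral_const_mul,
      integral_exp_neg_mul_mul hβ.ne', intervalIntegral.integral_const, smul_eq_mul]
    ring
  _ ≤ _ := intervalIntegral_intervalIntegral_mono hex (by positivity)
    ((by fun_prop : Continuous fun q : ℝ × ℝ => exp (-β * x) * exp (-β * q.1) * q.1)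
      |>.integrableOn_of_isBounded ((Metric.isBounded_Ioc _ _).prod (Metric.isBounded_Ioc _ _)))
    (hi.mono_set (prod_mono le_rfl Ioc_subset_Icc_self))
    fun t ht θ hθ => mul_le_mul_of_nonneg_right
      (hlb t ⟨he.trans_lt ht.1, ht.2⟩ θ (Ioc_subset_Icc_self hθ)) (he.trans ht.1.le)

theorem integral_integral_le_exp_mul_funF (hβ : 0 < β) (he : 0 ≤ e) (hex : e ≤ x)
    (hi : IntegrableOn (fun q : ℝ × ℝ => p q.1 q.2 * q.1) (Ioc e x ×ˢ Icc 0 (2 * π)))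
    (hub : ∀ t ∈ Ioc (0:ℝ) x, ∀ θ ∈ Icc (0:ℝ) (2 * π),
      p t θ ≤ exp (-β * x - β * t + t / 2 * β * (1 + cos θ))) :
    ∫ θ in (0:ℝ)..(2 * π), ∫ t in e..x, p t θ * t
      ≤ exp (-β * x) * (2 * π / (3 * β) * (funF β x - funF β e)) := calc
  _ ≤ ∫ θ in (0:ℝ)..(2 * π), ∫ t in e..x,
      exp (-β * x - β * t + t / 2 * β * (1 + cos θ)) * t :=
    intervalIntegral_intervalIntegral_mono hex (by positivity)
      (hi.mono_set (prod_mono le_rfl Ioc_subset_Icc_self))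
      ((by fun_prop : Continuous fun q : ℝ × ℝ =>
        exp (-β * x - β * q.1 + q.1 / 2 * β * (1 + cos q.2)) * q.1)
        |>.integrableOn_of_isBounded ((Metric.isBounded_Ioc _ _).prod (Metric.isBounded_Ioc _ _)))
      fun t ht θ hθ => mul_le_mul_of_nonneg_right
        (hub t ⟨he.trans_lt ht.1, ht.2⟩ θ (Ioc_subset_Icc_self hθ)) (he.trans ht.1.le)
  _ = exp (-β * x) * ∫ θ in (0:ℝ)..(2 * π), ∫ t in e..x, corrKernel β t θ * t := by
    simp only [← intervalIntegral.integral_const_mul, corrKernel, ← mul_assoc, ← exp_add]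
    ring_nf
  _ = _ := by rw [integral_integral_corrKernel_mul hβ.ne']

end BlockingBounds

theorem stmt_9_general (β lam x e : ℝ) (hβ : 0 < β) (hlam : 0 < lam)
    (he : 0 ≤ e) (hex : e ≤ x)
    (p : ℝ → ℝ → ℝ)
    (hi : IntegrableOn (fun q : ℝ × ℝ => p q.1 q.2 * q.1)
      (Set.Ioc e x ×ˢ Set.Icc 0 (2 * π)))
    (hlb : ∀ t ∈ Set.Ioc (0:ℝ) x, ∀ θ ∈ Set.Icc (0:ℝ) (2 * π),
      Real.exp (-β * x) * Real.exp (-β * t) ≤ p t θ)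
    (hub : ∀ t ∈ Set.Ioc (0:ℝ) x, ∀ θ ∈ Set.Icc (0:ℝ) (2 * π),
      p t θ ≤ Real.exp (-β * x - β * t + t / 2 * β * (1 + Real.cos θ))) :
    Real.exp (-β * x - lam * π * e ^ 2
        - 2 * π * lam / (3 * β) * (funF β x - funF β e))
      ≤ Real.exp (-β * x - lam * π * e ^ 2
          - lam * Real.exp (β * x) * ∫ θ in (0:ℝ)..(2 * π), ∫ t in e..x, p t θ * t)
    ∧ Real.exp (-β * x - lam * π * e ^ 2
          - lam * Real.exp (β * x) * ∫ θ in (0:ℝ)..(2 * π), ∫ t in e..x, p t θ * t)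
      ≤ Real.exp (-β * x - lam * π * e ^ 2
          - 2 * π * lam / β ^ 2 * (funF1 β e - funF1 β x)) := by
  set S := ∫ θ in (0:ℝ)..(2 * π), ∫ t in e..x, p t θ * t
  have hcancel : ∀ c, lam * exp (β * x) * (exp (-β * x) * c) = lam * c := fun c => by
    rw [← mul_assoc, mul_assoc lam, ← exp_add, neg_mul, add_neg_cancel, exp_zero, mul_one]
  constructor <;> refine exp_le_exp.mpr (sub_le_sub_left ?_ _)
  · calc lam * exp (β * x) * S
        ≤ lam * exp (β * x) *
          (exp (-β * x) * (2 * π / (3 * β) * (funF β x - funF β e))) := by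
          gcongr
          exact integral_integral_le_exp_mul_funF hβ he hex hi hub
      _ = _ := by rw [hcancel]; ring
  · calc 2 * π * lam / β ^ 2 * (funF1 β e - funF1 β x)
        = lam * exp (β * x) * (exp (-β * x) * (2 * π / β ^ 2 * (funF1 β e - funF1 β x))) := by
          rw [hcancel]; ring
      _ ≤ lam * exp (β * x) * S := by
          gcongr
          exact exp_mul_funF1_le_integral_integral hβ he hex hi hlb

/-- Lemma 8 (bounds): if the joint LoS probability `p` lies between the
independent-blocking value and the maximally-correlated value, then
`G[p] = exp(−βx − λπe² − λe^{βx}∫₀^{2π}∫ₑ^x p t dt dθ)` is sandwiched between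
the maximally-correlated lower bound and the independent-blocking upper
bound. -/
theorem stmt_9 (β lam x e : ℝ) (hβ : 0 < β) (hlam : 0 < lam) (hx : 0 < x)
    (he : 0 ≤ e) (hex : e ≤ x)
    (p : ℝ → ℝ → ℝ)
    (hm : Measurable (Function.uncurry p))
    (hnn : ∀ t θ : ℝ, 0 ≤ p t θ)
    (hi : IntegrableOn (fun q : ℝ × ℝ => p q.1 q.2 * q.1)
      (Set.Ioc e x ×ˢ Set.Icc 0 (2 * π)))
    (hlb : ∀ t ∈ Set.Ioc (0:ℝ) x, ∀ θ ∈ Set.Icc (0:ℝ) (2 * π),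
      Real.exp (-β * x) * Real.exp (-β * t) ≤ p t θ)
    (hub : ∀ t ∈ Set.Ioc (0:ℝ) x, ∀ θ ∈ Set.Icc (0:ℝ) (2 * π),
      p t θ ≤ Real.exp (-β * x - β * t + t / 2 * β * (1 + Real.cos θ))) :
    Real.exp (-β * x - lam * π * e ^ 2
        - 2 * π * lam / (3 * β) * (funF β x - funF β e))
      ≤ Real.exp (-β * x - lam * π * e ^ 2
          - lam * Real.exp (β * x) * ∫ θ in (0:ℝ)..(2 * π), ∫ t in e..x, p t θ * t)
    ∧ Real.exp (-β * x - lam * π * e ^ 2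
          - lam * Real.exp (β * x) * ∫ θ in (0:ℝ)..(2 * π), ∫ t in e..x, p t θ * t)
      ≤ Real.exp (-β * x - lam * π * e ^ 2
          - 2 * π * lam / β ^ 2 * (funF1 β e - funF1 β x)) :=
  stmt_9_general β lam x e hβ hlam he hex p hi hlb hub
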